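/- arXiv:2601.01731 — 3 statements merged into one kernel-verified Lean document; each statement's English description precedes it below -/
import Mathlib

section
/- On the Cartesian torus grid, let W_{ij} ∈ L¹(T^d) (i,j = 1,…,n), let 1 ≤ q < ∞, let u_j : G → ℝ, and let p_i be the fully implicit discrete potential p_i(K) = ∑_{j=1}^n ∑_{J∈G} m(J)·W^{ij}_{KJ}·u_j(J). Then ‖p_i‖_{0,q,T} ≤ ∑_{j=1}^n ‖W_{ij}‖_{L¹(T^d)}·‖u_j‖_{0,q,T}, and moreover for every direction ℓ ∈ {1,…,d}: (∑_{K∈G} m(K)·|p_i(K+e_ℓ) − p_i(K)|^q)^{1/q} ≤ ∑_{j=1}^n ‖W_{ij}‖_{L¹(T^d)}·(∑_{K∈G} m(K)·|u_j(K+e_ℓ) − u_j(K)|^q)^{1/q}. -/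
open MeasureTheory Real Finset

namespace SG

instance : Fact ((0:ℝ) < 1) := ⟨one_pos⟩

variable {d : ℕ}

/-- Cells of the Cartesian torus grid. -/
abbrev Cell (M : Fin d → ℕ) := ∀ ℓ : Fin d, ZMod (M ℓ)

/-- Cell measure `m(K) = Δx₁⋯Δx_d`. -/
noncomputable def mK (M : Fin d → ℕ) : ℝ := ∏ ℓ, ((M ℓ : ℝ))⁻¹

/-- Transmissibility coefficient of an edge in direction `ℓ`:
`τ_σ = m(σ)/d_σ = m(K)·M_ℓ²`. -/
noncomputable def τ (M : Fin d → ℕ) (ℓ : Fin d) : ℝ := mK M * (M ℓ : ℝ) ^ 2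

/-- Shift a cell by `s` in direction `ℓ` (mod `M ℓ`). -/
def shift (M : Fin d → ℕ) (K : Cell M) (ℓ : Fin d) (s : ℤ) : Cell M :=
  Function.update K ℓ (K ℓ + (s : ZMod (M ℓ)))

/-- Hypothesis (H2): `B` is continuous on `[0,∞)` with `0 < B(s) ≤ 1` for `s ≥ 0`. -/
def H2 (B : ℝ → ℝ) : Prop :=
  ContinuousOn B (Set.Ici 0) ∧ ∀ s : ℝ, 0 ≤ s → 0 < B s ∧ B s ≤ 1

/-- Hypothesis (H3): `α ∈ [0,1)` and `B(s) ≥ 1 − α·s` for all `s ≥ 0`. -/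
def H3 (B : ℝ → ℝ) (α : ℝ) : Prop :=
  0 ≤ α ∧ α < 1 ∧ ∀ s : ℝ, 0 ≤ s → 1 - α * s ≤ B s

/-- The scaled weight function `B_κ(s) = κ·B(s/κ)`. -/
noncomputable def Bk (κ : ℝ) (B : ℝ → ℝ) (s : ℝ) : ℝ := κ * B (s / κ)

/-- Upwind value on the (oriented) edge from `K` to `L`. -/
noncomputable def upw {M : Fin d → ℕ} (u p : Cell M → ℝ) (K L : Cell M) : ℝ :=
  if 0 ≤ p L - p K then u L else u K

/-- Numerical flux `F_{K,σ}[u,p]` from `K` through the edge (in direction `ℓ`) to its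
neighbor `L`. -/
noncomputable def flux (M : Fin d → ℕ) (κ : ℝ) (B : ℝ → ℝ) (u p : Cell M → ℝ)
    (ℓ : Fin d) (K L : Cell M) : ℝ :=
  -(τ M ℓ) * (Bk κ B |p L - p K| * (u L - u K) + upw u p K L * (p L - p K))

/-- Sum of the numerical fluxes over the `2d` edges incident to `K`. -/
noncomputable def fluxSum (M : Fin d → ℕ) (κ : ℝ) (B : ℝ → ℝ) (u p : Cell M → ℝ)
    (K : Cell M) : ℝ :=
  ∑ ℓ : Fin d, (flux M κ B u p ℓ K (shift M K ℓ 1) + flux M κ B u p ℓ K (shift M K ℓ (-1)))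

/-- One implicit Euler finite-volume step with prescribed potential `p`. -/
def Step (M : Fin d → ℕ) (κ Δt : ℝ) (B : ℝ → ℝ) (uPrev u p : Cell M → ℝ) : Prop :=
  ∀ K : Cell M, mK M * (u K - uPrev K) / Δt + fluxSum M κ B u p K = 0

/-- Discrete Boltzmann entropy. -/
noncomputable def HB (M : Fin d → ℕ) [∀ ℓ, NeZero (M ℓ)] {n : ℕ}
    (u : Fin n → Cell M → ℝ) : ℝ :=
  ∑ i, ∑ K : Cell M, mK M * (u i K * (Real.log (u i K) - 1))

/-- Discrete Rao entropy associated to discrete kernels `Wd`. -/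
noncomputable def HR (M : Fin d → ℕ) [∀ ℓ, NeZero (M ℓ)] {n : ℕ}
    (Wd : Fin n → Fin n → Cell M → Cell M → ℝ) (u : Fin n → Cell M → ℝ) : ℝ :=
  (1/2) * ∑ i, ∑ j, ∑ K : Cell M, ∑ J : Cell M,
    mK M * mK M * Wd i j K J * u i K * u j J

/-- Boltzmann entropy production term `P_B`. -/
noncomputable def PB (M : Fin d → ℕ) [∀ ℓ, NeZero (M ℓ)] {n : ℕ} (κ : ℝ) (B : ℝ → ℝ)
    (u p : Fin n → Cell M → ℝ) : ℝ :=
  4 * ∑ i, ∑ K : Cell M, ∑ ℓ : Fin d,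
    τ M ℓ * Bk κ B |p i (shift M K ℓ 1) - p i K| *
      (Real.sqrt (u i (shift M K ℓ 1)) - Real.sqrt (u i K)) ^ 2

/-- Rao entropy production term `P_R`. -/
noncomputable def PR (M : Fin d → ℕ) [∀ ℓ, NeZero (M ℓ)] {n : ℕ}
    (u p : Fin n → Cell M → ℝ) : ℝ :=
  ∑ i, ∑ K : Cell M, ∑ ℓ : Fin d,
    τ M ℓ * upw (u i) (p i) K (shift M K ℓ 1) * (p i (shift M K ℓ 1) - p i K) ^ 2

/-- Cross term `X(u,p)`. -/
noncomputable def Xc (M : Fin d → ℕ) [∀ ℓ, NeZero (M ℓ)] {n : ℕ}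
    (u p : Fin n → Cell M → ℝ) : ℝ :=
  ∑ i, ∑ K : Cell M, ∑ ℓ : Fin d,
    τ M ℓ * (p i (shift M K ℓ 1) - p i K) * (u i (shift M K ℓ 1) - u i K)

/-- Discrete Fisher information `∑_i ∑_σ τ_σ |D_σ √u_i|²`. -/
noncomputable def Fisher (M : Fin d → ℕ) [∀ ℓ, NeZero (M ℓ)] {n : ℕ}
    (u : Fin n → Cell M → ℝ) : ℝ :=
  ∑ i, ∑ K : Cell M, ∑ ℓ : Fin d,
    τ M ℓ * (Real.sqrt (u i (shift M K ℓ 1)) - Real.sqrt (u i K)) ^ 2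

/-- The torus `T^d = (ℝ/ℤ)^d`. -/
abbrev Td (d : ℕ) := Fin d → AddCircle (1 : ℝ)

/-- The box `Q_K ⊆ T^d` corresponding to the cell `K`. -/
noncomputable def QK (M : Fin d → ℕ) (K : Cell M) : Set (Td d) :=
  Set.univ.pi fun ℓ => (fun t : ℝ => (t : AddCircle (1 : ℝ))) ''
    Set.Ico (((K ℓ).val : ℝ) / (M ℓ)) ((((K ℓ).val : ℝ) + 1) / (M ℓ))

/-- The discrete kernel `W_{KJ} = (m(K)m(J))⁻¹ ∫_{Q_K}∫_{Q_J} W(x−y) dy dx`. -/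
noncomputable def Wdisc (M : Fin d → ℕ) (W : Td d → ℝ) (K J : Cell M) : ℝ :=
  (mK M * mK M)⁻¹ * ∫ x in QK M K, ∫ y in QK M J, W (x - y)

/-- The discrete nonlocal potential `p_i(K) = ∑_j ∑_J m(J)·Wd^{ij}_{KJ}·u_j(J)`. -/
noncomputable def pot (M : Fin d → ℕ) [∀ ℓ, NeZero (M ℓ)] {n : ℕ}
    (Wd : Fin n → Fin n → Cell M → Cell M → ℝ) (u : Fin n → Cell M → ℝ)
    (i : Fin n) (K : Cell M) : ℝ :=
  ∑ j, ∑ J : Cell M, mK M * Wd i j K J * u j J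

/-- Discrete `L^q` norm of a cell function. -/
noncomputable def normq (M : Fin d → ℕ) [∀ ℓ, NeZero (M ℓ)] (q : ℝ)
    (u : Cell M → ℝ) : ℝ :=
  (∑ K : Cell M, mK M * |u K| ^ q) ^ (1/q)

/-- Discrete `L^q` norm of an edge function (dual-cell measure `m(Δ_σ) = m(σ)·d_σ = m(K)`). -/
noncomputable def enorm (M : Fin d → ℕ) [∀ ℓ, NeZero (M ℓ)] (q : ℝ)
    (w : Cell M → Fin d → ℝ) : ℝ :=
  (∑ K : Cell M, ∑ ℓ : Fin d, mK M * |w K ℓ| ^ q) ^ (1/q)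

/-- Magnitude of the discrete gradient on the edge `(K,ℓ)`:
`|∇^h_σ v| = d·D_σ v/d_σ`. -/
noncomputable def gradh (M : Fin d → ℕ) (v : Cell M → ℝ) (K : Cell M) (ℓ : Fin d) : ℝ :=
  d * (M ℓ : ℝ) * |v (shift M K ℓ 1) - v K|

/-! The potential is a sum over `j` of discrete convolutions, so by Minkowski's inequality it
suffices to bound one of them, and the Schur test bounds it on weighted `ℓ^q` by any common bound
of the weighted row and column sums of `|W_{KJ}|`. These are at most `‖W‖_{L¹}`: the products
`Q_K × Q_J` are disjoint pieces of `Q_K × T^d` (resp. `T^d × Q_J`), where translation invariance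
turns the integral of `|W (x - y)|` into `|Q_K| ‖W‖_{L¹}`, and `|Q_K| ≤ m(K)` because the boxes
are disjoint translates of one another. Finally, the discrete kernel is invariant under a common
shift of `K` and `J`, so differences of the potential are the potential of the differences. -/

open Function

section WeightedLpNorm

variable {ι : Type*} [Fintype ι] {w : ι → ℝ} {q : ℝ}

noncomputable def weightedLpNorm (w : ι → ℝ) (q : ℝ) (f : ι → ℝ) : ℝ :=
  (∑ k, w k * |f k| ^ q) ^ (1 / q)

lemma weightedLpNorm_add_le (hw : ∀ k, 0 ≤ w k) (hq : 1 ≤ q) (f g : ι → ℝ) :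
    weightedLpNorm w q (f + g) ≤ weightedLpNorm w q f + weightedLpNorm w q g := by
  have absorb_weight : ∀ h : ι → ℝ,
      ∑ k, w k * |h k| ^ q = ∑ k, |w k ^ (1 / q) * h k| ^ q := fun h =>
    sum_congr rfl fun k _ => by
      rw [abs_mul, mul_rpow (abs_nonneg _) (abs_nonneg _), abs_of_nonneg (rpow_nonneg (hw k) _),
        ← rpow_mul (hw k), one_div_mul_cancel (by positivity), rpow_one]
  simpa only [weightedLpNorm, absorb_weight, Pi.add_apply, mul_add] using
    Real.Lp_add_le univ (fun k => w k ^ (1 / q) * f k) (fun k => w k ^ (1 / q) * g k) hq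

lemma weightedLpNorm_sum_le (hw : ∀ k, 0 ≤ w k) (hq : 1 ≤ q) {κ : Type*} (s : Finset κ)
    (f : κ → ι → ℝ) :
    weightedLpNorm w q (fun k => ∑ j ∈ s, f j k) ≤ ∑ j ∈ s, weightedLpNorm w q (f j) := by
  rw [← sum_fn]
  refine le_sum_of_subadditive _ (le_of_eq ?_) (weightedLpNorm_add_le hw hq) s f
  have hq0 : q ≠ 0 := by positivity
  simp [weightedLpNorm, zero_rpow hq0, zero_rpow (inv_ne_zero hq0)]

lemma abs_sum_mul_rpow_le (hw : ∀ k, 0 ≤ w k) (hq : 1 ≤ q) (a v : ι → ℝ) :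
    |∑ j, w j * a j * v j| ^ q
      ≤ (∑ j, w j * |a j|) ^ (q - 1) * ∑ j, w j * |a j| * |v j| ^ q := by
  have hq0 : q ≠ 0 := by positivity
  have hb : ∀ j, 0 ≤ w j * |a j| := fun j => mul_nonneg (hw j) (abs_nonneg _)
  have triangle : |∑ j, w j * a j * v j| ≤ ∑ j, w j * |a j| * |v j| :=
    (abs_sum_le_sum_abs _ _).trans_eq <| sum_congr rfl fun j _ => by
      rw [abs_mul, abs_mul, abs_of_nonneg (hw j)]
  have holder := inner_le_weight_mul_Lp_of_nonneg univ hq _ _ hb fun j => abs_nonneg (v j)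
  calc |∑ j, w j * a j * v j| ^ q
      ≤ ((∑ j, w j * |a j|) ^ (1 - q⁻¹) * (∑ j, w j * |a j| * |v j| ^ q) ^ q⁻¹) ^ q :=
        rpow_le_rpow (abs_nonneg _) (triangle.trans holder) (by positivity)
    _ = (∑ j, w j * |a j|) ^ (q - 1) * ∑ j, w j * |a j| * |v j| ^ q := by
        have hB : 0 ≤ ∑ j, w j * |a j| := sum_nonneg fun j _ => hb j
        have hA : 0 ≤ ∑ j, w j * |a j| * |v j| ^ q := sum_nonneg fun j _ => by
          have := hb j; positivity
        rw [mul_rpow (rpow_nonneg hB _) (rpow_nonneg hA _), ← rpow_mul hB, ← rpow_mul hA,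
          inv_mul_cancel₀ hq0, rpow_one, sub_mul, one_mul, inv_mul_cancel₀ hq0]

lemma weightedLpNorm_schur_le (hw : ∀ k, 0 ≤ w k) (hq : 1 ≤ q) (a : ι → ι → ℝ) (v : ι → ℝ)
    {C : ℝ} (hrow : ∀ k, ∑ j, w j * |a k j| ≤ C) (hcol : ∀ j, ∑ k, w k * |a k j| ≤ C) :
    weightedLpNorm w q (fun k => ∑ j, w j * a k j * v j) ≤ C * weightedLpNorm w q v := by
  have hq0 : q ≠ 0 := by positivity
  rcases isEmpty_or_nonempty ι with _ | ⟨⟨k₀⟩⟩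
  · simp [weightedLpNorm, zero_rpow (inv_ne_zero hq0)]
  have hC : 0 ≤ C := (sum_nonneg fun j _ => mul_nonneg (hw j) (abs_nonneg _)).trans (hrow k₀)
  set N := ∑ k, w k * |v k| ^ q
  have hN : 0 ≤ N := sum_nonneg fun k _ => mul_nonneg (hw k) (by positivity)
  have pointwise : ∀ k, |∑ j, w j * a k j * v j| ^ q
      ≤ C ^ (q - 1) * ∑ j, w j * |a k j| * |v j| ^ q := fun k =>
    (abs_sum_mul_rpow_le hw hq (a k) v).trans <| mul_le_mul_of_nonneg_right
      (rpow_le_rpow (sum_nonneg fun j _ => mul_nonneg (hw j) (abs_nonneg _)) (hrow k)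
        (by linarith))
      (sum_nonneg fun j _ => mul_nonneg (mul_nonneg (hw j) (abs_nonneg _)) (by positivity))
  have summed : ∑ k, w k * |∑ j, w j * a k j * v j| ^ q ≤ C ^ q * N := calc
    _ ≤ ∑ k, w k * (C ^ (q - 1) * ∑ j, w j * |a k j| * |v j| ^ q) :=
        sum_le_sum fun k _ => mul_le_mul_of_nonneg_left (pointwise k) (hw k)
    _ = C ^ (q - 1) * ∑ j, (∑ k, w k * |a k j|) * (w j * |v j| ^ q) := by
        simp only [mul_sum, sum_mul]
        rw [sum_comm]
        exact sum_congr rfl fun j _ => sum_congr rfl fun k _ => by ring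
    _ ≤ C ^ (q - 1) * ∑ j, C * (w j * |v j| ^ q) :=
        mul_le_mul_of_nonneg_left (sum_le_sum fun j _ =>
          mul_le_mul_of_nonneg_right (hcol j) (mul_nonneg (hw j) (by positivity)))
          (rpow_nonneg hC _)
    _ = C ^ q * N := by
        rw [← mul_sum, ← mul_assoc, ← rpow_add_one' hC (by simpa using hq0), sub_add_cancel]
  calc weightedLpNorm w q (fun k => ∑ j, w j * a k j * v j)
      ≤ (C ^ q * N) ^ (1 / q) := rpow_le_rpow
        (sum_nonneg fun k _ => mul_nonneg (hw k) (by positivity)) summed (by positivity)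
    _ = C * weightedLpNorm w q v := by
        rw [weightedLpNorm, mul_rpow (rpow_nonneg hC _) hN, ← rpow_mul hC,
          mul_one_div_cancel hq0, rpow_one]

end WeightedLpNorm

lemma sum_setIntegral_le_setIntegral {X κ : Type*} [MeasurableSpace X] {μ : Measure X}
    {f : X → ℝ} (hf : 0 ≤ f) {t : Set X} (hft : IntegrableOn f t μ) (s : Finset κ)
    {S : κ → Set X} (hSm : ∀ i, MeasurableSet (S i)) (hSd : Pairwise (Disjoint on S))
    (hSt : ∀ i, S i ⊆ t) :
    ∑ i ∈ s, ∫ x in S i, f x ∂μ ≤ ∫ x in t, f x ∂μ := by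
  rw [← integral_biUnion_finset s (fun i _ => hSm i) (fun i _ j _ hij => hSd hij)
    (fun i _ => hft.mono_set (hSt i))]
  exact setIntegral_mono_set hft (ae_of_all _ hf)
    (Set.iUnion₂_subset fun i _ => hSt i).eventuallyLE

lemma measureReal_le_inv_card {X κ : Type*} [Fintype κ] [MeasurableSpace X] {μ : Measure X}
    [IsProbabilityMeasure μ] {S : κ → Set X} (hSm : ∀ i, MeasurableSet (S i))
    (hSd : Pairwise (Disjoint on S)) (hS : ∀ i j, μ (S i) = μ (S j)) (i : κ) :
    μ.real (S i) ≤ (Fintype.card κ : ℝ)⁻¹ := by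
  have hcard : (0 : ℝ) < Fintype.card κ := Nat.cast_pos.2 (Fintype.card_pos_iff.2 ⟨i⟩)
  have total : Fintype.card κ * μ.real (S i) ≤ 1 := calc
    _ = ∑ j, μ.real (S j) := by simp [measureReal_def, hS _ i]
    _ = μ.real (⋃ j ∈ (univ : Finset κ), S j) :=
        (measureReal_biUnion_finset (fun j _ k _ hjk => hSd hjk) fun j _ => hSm j).symm
    _ ≤ 1 := measureReal_le_one
  rw [← one_div, le_div_iff₀ hcard, mul_comm]
  exact total

lemma setIntegral_image_add_right {G : Type*} [MeasurableSpace G] [AddGroup G] [MeasurableAdd G]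
    (μ : Measure G) [μ.IsAddRightInvariant] (f : G → ℝ) (v : G) (s : Set G) :
    ∫ x in (· + v) '' s, f x ∂μ = ∫ x in s, f (x + v) ∂μ :=
  (measurePreserving_add_right μ v).setIntegral_image_emb (measurableEmbedding_addRight v) f s

section ConvolutionKernel

variable {G : Type*} [MeasurableSpace G] [AddCommGroup G] [MeasurableAdd₂ G] [MeasurableNeg G]
  {μ : Measure G} [IsFiniteMeasure μ] [μ.IsAddLeftInvariant] {W : G → ℝ}

lemma integrable_comp_sub_prod (hW : Integrable W μ) :
    Integrable (fun z : G × G => W (z.1 - z.2)) (μ.prod μ) :=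
  (measurePreserving_sub_prod μ μ).integrable_comp_of_integrable (hW.comp_fst μ)

lemma abs_setIntegral_setIntegral_sub_le (hW : Integrable W μ) (s t : Set G) :
    |∫ x in s, ∫ y in t, W (x - y) ∂μ ∂μ| ≤ ∫ z in s ×ˢ t, |W (z.1 - z.2)| ∂μ.prod μ := by
  rw [← setIntegral_prod _ (integrable_comp_sub_prod hW).integrableOn]
  exact abs_integral_le_integral_abs

variable {ι : Type*} [Fintype ι] {Q : ι → Set G}

lemma sum_abs_setIntegral_sub_le_row [μ.IsNegInvariant] (hW : Integrable W μ)
    (hQm : ∀ i, MeasurableSet (Q i)) (hQd : Pairwise (Disjoint on Q)) (k : ι) :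
    ∑ j, |∫ x in Q k, ∫ y in Q j, W (x - y) ∂μ ∂μ| ≤ μ.real (Q k) * ∫ x, |W x| ∂μ := calc
  _ ≤ ∑ j, ∫ z in Q k ×ˢ Q j, |W (z.1 - z.2)| ∂μ.prod μ :=
      sum_le_sum fun j _ => abs_setIntegral_setIntegral_sub_le hW _ _
  _ ≤ ∫ z in Q k ×ˢ Set.univ, |W (z.1 - z.2)| ∂μ.prod μ :=
      sum_setIntegral_le_setIntegral (fun _ => abs_nonneg _)
        (integrable_comp_sub_prod hW).abs.integrableOn _ (fun j => (hQm k).prod (hQm j))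
        (fun _ _ hij => Set.disjoint_prod.2 (Or.inr (hQd hij)))
        fun j => Set.prod_mono le_rfl (Set.subset_univ _)
  _ = ∫ x in Q k, ∫ y, |W (x - y)| ∂μ ∂μ := by
      rw [setIntegral_prod _ (integrable_comp_sub_prod hW).abs.integrableOn, Measure.restrict_univ]
  _ = μ.real (Q k) * ∫ x, |W x| ∂μ := by
      simp_rw [integral_sub_left_eq_self (fun y => |W y|)]
      rw [setIntegral_const, smul_eq_mul]

lemma sum_abs_setIntegral_sub_le_col (hW : Integrable W μ) (hQm : ∀ i, MeasurableSet (Q i))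
    (hQd : Pairwise (Disjoint on Q)) (j : ι) :
    ∑ k, |∫ x in Q k, ∫ y in Q j, W (x - y) ∂μ ∂μ| ≤ μ.real (Q j) * ∫ x, |W x| ∂μ := calc
  _ ≤ ∑ k, ∫ z in Q k ×ˢ Q j, |W (z.1 - z.2)| ∂μ.prod μ :=
      sum_le_sum fun k _ => abs_setIntegral_setIntegral_sub_le hW _ _
  _ ≤ ∫ z in Set.univ ×ˢ Q j, |W (z.1 - z.2)| ∂μ.prod μ :=
      sum_setIntegral_le_setIntegral (fun _ => abs_nonneg _)
        (integrable_comp_sub_prod hW).abs.integrableOn _ (fun k => (hQm k).prod (hQm j))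
        (fun _ _ hkl => Set.disjoint_prod.2 (Or.inl (hQd hkl)))
        fun k => Set.prod_mono (Set.subset_univ _) le_rfl
  _ = ∫ y in Q j, ∫ x, |W (x - y)| ∂μ ∂μ := by
      rw [← setIntegral_prod_swap]
      simp only [Prod.fst_swap, Prod.snd_swap]
      rw [setIntegral_prod (fun z => |W (z.2 - z.1)|)
          (integrable_comp_sub_prod hW).abs.swap.integrableOn,
        Measure.restrict_univ]
  _ = μ.real (Q j) * ∫ x, |W x| ∂μ := by
      simp_rw [integral_sub_right_eq_self (fun x => |W x|)]
      rw [setIntegral_const, smul_eq_mul]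

end ConvolutionKernel

instance : IsProbabilityMeasure (volume : Measure (AddCircle (1 : ℝ))) :=
  ⟨(AddCircle.measure_univ 1).trans ENNReal.ofReal_one⟩

instance : (volume : Measure (Td d)).IsNegInvariant :=
  Measure.IsAddHaarMeasure.isNegInvariant_of_regular _

lemma injOn_coe_Ico_zero_one : Set.InjOn ((↑) : ℝ → AddCircle (1 : ℝ)) (Set.Ico 0 1) :=
  fun s hs t ht hst => (AddCircle.coe_eq_coe_iff_of_mem_Ico (a := 0) (by simpa using hs)
    (by simpa using ht)).1 hst

lemma Ico_val_div_subset (m : ℕ) [NeZero m] (a : ZMod m) :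
    Set.Ico ((a.val : ℝ) / m) ((a.val + 1) / m) ⊆ Set.Ico 0 1 := by
  have hm : (0 : ℝ) < m := Nat.cast_pos.2 (NeZero.pos m)
  have hlt : (a.val : ℝ) + 1 ≤ m := by exact_mod_cast ZMod.val_lt a
  exact Set.Ico_subset_Ico (by positivity) ((div_le_one hm).2 hlt)

lemma disjoint_image_coe_Ico_val_div {m : ℕ} [NeZero m] {a b : ZMod m} (hab : a ≠ b) :
    Disjoint (((↑) : ℝ → AddCircle (1 : ℝ)) '' Set.Ico ((a.val : ℝ) / m) ((a.val + 1) / m))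
      ((↑) '' Set.Ico ((b.val : ℝ) / m) ((b.val + 1) / m)) := by
  have hm : (0 : ℝ) < m := Nat.cast_pos.2 (NeZero.pos m)
  rw [Set.disjoint_left]
  rintro _ ⟨s, hs, rfl⟩ ⟨t, ht, hts⟩
  obtain rfl := injOn_coe_Ico_zero_one (Ico_val_div_subset m b ht)
    (Ico_val_div_subset m a hs) hts
  have hab' : a.val < b.val + 1 := by
    exact_mod_cast (div_lt_div_iff_of_pos_right hm).1 (hs.1.trans_lt ht.2)
  have hba' : b.val < a.val + 1 := by
    exact_mod_cast (div_lt_div_iff_of_pos_right hm).1 (ht.1.trans_lt hs.2)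
  exact hab (ZMod.val_injective m (by omega))

lemma image_coe_Ico_val_div (m : ℕ) [NeZero m] (a : ZMod m) :
    ((↑) : ℝ → AddCircle (1 : ℝ)) '' Set.Ico ((a.val : ℝ) / m) ((a.val + 1) / m)
      = (· + ZMod.toAddCircle a) '' ((↑) '' Set.Ico 0 (m : ℝ)⁻¹) := by
  rw [Set.image_image, ZMod.toAddCircle_apply]
  simp_rw [← AddCircle.coe_add]
  rw [← Set.image_image ((↑) : ℝ → AddCircle (1 : ℝ)) (· + (a.val : ℝ) / m),
    Set.image_add_const_Ico]
  congr 2 <;> ring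

lemma shift_one_eq_add (M : Fin d → ℕ) (K : Cell M) (ℓ : Fin d) :
    shift M K ℓ 1 = K + Pi.single ℓ 1 := by
  ext m
  by_cases h : m = ℓ
  · subst h; simp [shift]
  · simp [shift, h]

lemma QK_zero (M : Fin d → ℕ) :
    QK M 0 = Set.univ.pi fun ℓ => ((↑) : ℝ → AddCircle (1 : ℝ)) '' Set.Ico 0 (M ℓ : ℝ)⁻¹ := by
  simp [QK]

section TorusGrid

variable (M : Fin d → ℕ) [∀ ℓ, NeZero (M ℓ)]

lemma mK_eq_inv_card : mK M = (Fintype.card (Cell M) : ℝ)⁻¹ := by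
  simp [mK, Fintype.card_pi, ZMod.card, prod_inv_distrib]

lemma mK_pos : 0 < mK M := by
  rw [mK_eq_inv_card]
  exact inv_pos.2 (Nat.cast_pos.2 Fintype.card_pos)

noncomputable def cellCorner : Cell M →+ Td d :=
  AddMonoidHom.pi fun ℓ => ZMod.toAddCircle.comp (Pi.evalAddMonoidHom _ ℓ)

lemma QK_eq_image_add_cellCorner (K : Cell M) : QK M K = (· + cellCorner M K) '' QK M 0 := by
  rw [QK_zero, show (· + cellCorner M K) = Pi.map fun ℓ y => y + cellCorner M K ℓ from rfl,
    Set.piMap_image_univ_pi]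
  exact congrArg _ (funext fun ℓ => image_coe_Ico_val_div (M ℓ) (K ℓ))

lemma QK_add (K E : Cell M) : QK M (K + E) = (· + cellCorner M E) '' QK M K := by
  rw [QK_eq_image_add_cellCorner, QK_eq_image_add_cellCorner M K, Set.image_image, map_add]
  simp_rw [add_assoc]

lemma measurableSet_QK (K : Cell M) : MeasurableSet (QK M K) := by
  have hQ0 : MeasurableSet (QK M 0) := by
    rw [QK_zero]
    refine MeasurableSet.univ_pi fun ℓ => measurableSet_Ico.image_of_continuousOn_injOn
      continuous_quotient_mk'.continuousOn (injOn_coe_Ico_zero_one.mono ?_)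
    exact Set.Ico_subset_Ico le_rfl (inv_le_one_of_one_le₀ (Nat.one_le_cast.2 (NeZero.one_le)))
  rw [QK_eq_image_add_cellCorner, Set.image_add_right]
  exact hQ0.preimage (measurable_add_const _)

lemma pairwise_disjoint_QK : Pairwise (Disjoint on QK M) := by
  intro K J hKJ
  obtain ⟨ℓ, hℓ⟩ := Function.ne_iff.1 hKJ
  exact Set.disjoint_left.2 fun x hxK hxJ => Set.disjoint_left.1
    (disjoint_image_coe_Ico_val_div hℓ) (hxK ℓ trivial) (hxJ ℓ trivial)

lemma volume_QK (K : Cell M) : volume (QK M K) = volume (QK M 0) := by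
  rw [QK_eq_image_add_cellCorner, Set.image_add_right, measure_preimage_add_right]

lemma measureReal_QK_le (K : Cell M) : volume.real (QK M K) ≤ mK M := by
  rw [mK_eq_inv_card]
  exact measureReal_le_inv_card (measurableSet_QK M) (pairwise_disjoint_QK M)
    (fun K J => by rw [volume_QK, volume_QK M J]) K

end TorusGrid

section DiscreteKernel

variable (M : Fin d → ℕ) [∀ ℓ, NeZero (M ℓ)] {W : Td d → ℝ}

lemma Wdisc_add_add (K J E : Cell M) :
    Wdisc M W (K + E) (J + E) = Wdisc M W K J := by
  simp_rw [Wdisc, QK_add, setIntegral_image_add_right, add_sub_add_right_eq_sub]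

lemma mK_mul_abs_Wdisc (K J : Cell M) :
    mK M * |Wdisc M W K J| = (mK M)⁻¹ * |∫ x in QK M K, ∫ y in QK M J, W (x - y)| := by
  have hm := mK_pos M
  rw [Wdisc, abs_mul, abs_of_pos (by positivity)]
  field_simp

lemma inv_mK_mul_le {I C : ℝ} (K : Cell M) (hC : 0 ≤ C) (hI : I ≤ volume.real (QK M K) * C) :
    (mK M)⁻¹ * I ≤ C := by
  have hm := mK_pos M
  rw [inv_mul_le_iff₀ hm]
  exact hI.trans (mul_le_mul_of_nonneg_right (measureReal_QK_le M K) hC)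

lemma sum_mK_mul_abs_Wdisc_row_le (hW : Integrable W) (K : Cell M) :
    ∑ J, mK M * |Wdisc M W K J| ≤ ∫ x, |W x| := by
  simp_rw [mK_mul_abs_Wdisc, ← mul_sum]
  exact inv_mK_mul_le M K (integral_nonneg fun _ => abs_nonneg _)
    (sum_abs_setIntegral_sub_le_row hW (measurableSet_QK M) (pairwise_disjoint_QK M) K)

lemma sum_mK_mul_abs_Wdisc_col_le (hW : Integrable W) (J : Cell M) :
    ∑ K, mK M * |Wdisc M W K J| ≤ ∫ x, |W x| := by
  simp_rw [mK_mul_abs_Wdisc, ← mul_sum]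
  exact inv_mK_mul_le M J (integral_nonneg fun _ => abs_nonneg _)
    (sum_abs_setIntegral_sub_le_col hW (measurableSet_QK M) (pairwise_disjoint_QK M) J)

lemma pot_shift_sub {n : ℕ} (Wd : Fin n → Fin n → Cell M → Cell M → ℝ)
    (hWd : ∀ i j K J E, Wd i j (K + E) (J + E) = Wd i j K J) (u : Fin n → Cell M → ℝ)
    (i : Fin n) (K : Cell M) (ℓ : Fin d) :
    pot M Wd u i (shift M K ℓ 1) - pot M Wd u i K
      = pot M Wd (fun j J => u j (shift M J ℓ 1) - u j J) i K := by
  simp only [pot, shift_one_eq_add]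
  rw [← sum_sub_distrib]
  refine sum_congr rfl fun j _ => ?_
  rw [← Equiv.sum_comp (Equiv.addRight (Pi.single ℓ 1 : Cell M)), ← sum_sub_distrib]
  simp only [Equiv.coe_addRight, hWd, mul_sub]

end DiscreteKernel

/-- discrete `L^q` bounds for the nonlocal potential and its
differences. -/
theorem potential_discrete_norm_bounds {d n : ℕ} (M : Fin d → ℕ) [∀ ℓ, NeZero (M ℓ)]
    (W : Fin n → Fin n → Td d → ℝ)
    (hW : ∀ i j, MeasureTheory.Integrable (W i j))
    (q : ℝ) (hq : 1 ≤ q)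
    (u : Fin n → Cell M → ℝ) (i : Fin n) :
    normq M q (pot M (fun i j => Wdisc M (W i j)) u i)
      ≤ (∑ j, (∫ x : Td d, |W i j x|) * normq M q (u j)) ∧
    ∀ ℓ : Fin d,
      (∑ K : Cell M, mK M *
          |pot M (fun i j => Wdisc M (W i j)) u i (shift M K ℓ 1)
            - pot M (fun i j => Wdisc M (W i j)) u i K| ^ q) ^ (1/q)
        ≤ ∑ j, (∫ x : Td d, |W i j x|) *
            (∑ K : Cell M, mK M * |u j (shift M K ℓ 1) - u j K| ^ q) ^ (1/q) := by
  have hm : ∀ _ : Cell M, 0 ≤ mK M := fun _ => (mK_pos M).le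
  have potential_le : ∀ v : Fin n → Cell M → ℝ,
      weightedLpNorm (fun _ => mK M) q (pot M (fun i j => Wdisc M (W i j)) v i)
        ≤ ∑ j, (∫ x, |W i j x|) * weightedLpNorm (fun _ => mK M) q (v j) := fun v =>
    (weightedLpNorm_sum_le hm hq univ _).trans <| sum_le_sum fun j _ =>
      weightedLpNorm_schur_le hm hq _ _ (sum_mK_mul_abs_Wdisc_row_le M (hW i j))
        (sum_mK_mul_abs_Wdisc_col_le M (hW i j))
  refine ⟨potential_le u, fun ℓ => ?_⟩
  have h := potential_le fun j J => u j (shift M J ℓ 1) - u j J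
  simpa only [weightedLpNorm, ← pot_shift_sub M _ fun _ _ => Wdisc_add_add M] using h

end SG
end

section
/- On the Cartesian torus grid, let d ≥ 1, r₁ = (d+2)/d, r₂ = (d+2)/(d+1), N ≥ 1, Δt > 0, and let u^k : G → [0,∞) for k = 1,…,N. For an edge σ joining cells K and L, let ū^k_σ = ((√(u^k(K)) + √(u^k(L)))/2)². Then the discrete gradient of u^k satisfies ∑_{k=1}^N Δt·‖∇^h u^k‖_{0,r₂,T*}^{r₂} ≤ 2^{r₂}·(∑_{k=1}^N Δt·∑_{σ∈E} m(Δ_σ)·(ū^k_σ)^{r₁})^{r₂/(2r₁)}·(∑_{k=1}^N Δt·‖∇^h √(u^k)‖_{0,2,T*}²)^{r₂/2}. -/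
open MeasureTheory Real Finset

namespace SG

variable {d : ℕ}

/-! On each edge `σ = KL`, `D_σ u = (√u_K + √u_L) D_σ √u = 2 (ū_σ)^{1/2} D_σ √u`. Hölder's
inequality on the space-time edges, with exponents `2r₁`, `2` and `r₂` (note
`1/(2r₁) + 1/2 = 1/r₂`), then splits `∑ Δt m(Δ_σ) |∇^h u|^{r₂}` into the two factors. -/

lemma abs_sub_eq_sqrt_add_mul_abs_sqrt_sub {a b : ℝ} (ha : 0 ≤ a) (hb : 0 ≤ b) :
    |b - a| = (√a + √b) * |√b - √a| := by
  have hsq : b - a = (√a + √b) * (√b - √a) := by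
    linear_combination Real.sq_sqrt ha - Real.sq_sqrt hb
  rw [hsq, abs_mul, abs_of_nonneg (by positivity : 0 ≤ √a + √b)]

lemma gradh_eq_two_mul_mean_mul_gradh_sqrt (M : Fin d → ℕ) {u : Cell M → ℝ}
    (hu : ∀ K, 0 ≤ u K) (K : Cell M) (ℓ : Fin d) :
    gradh M u K ℓ =
      2 * ((√(u K) + √(u (shift M K ℓ 1))) / 2 * gradh M (fun J => √(u J)) K ℓ) := by
  simp only [gradh, abs_sub_eq_sqrt_add_mul_abs_sqrt_sub (hu K) (hu (shift M K ℓ 1))]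
  ring

lemma holderTriple_two_mul_add_two_div {δ : ℝ} (hδ : 0 < δ) :
    (2 * ((δ + 2) / δ)).HolderTriple 2 ((δ + 2) / (δ + 1)) where
  inv_add_inv_eq_inv := by field_simp; ring
  left_pos := by positivity
  right_pos := two_pos

lemma weighted_Lr_rpow_le_Lp_mul_Lq_of_nonneg {ι : Type*} (s : Finset ι) {p q r : ℝ}
    (hpqr : p.HolderTriple q r) {w f g : ι → ℝ} (hw : ∀ i ∈ s, 0 ≤ w i)
    (hf : ∀ i ∈ s, 0 ≤ f i) (hg : ∀ i ∈ s, 0 ≤ g i) :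
    ∑ i ∈ s, w i * (f i * g i) ^ r ≤
      (∑ i ∈ s, w i * f i ^ p) ^ (r / p) * (∑ i ∈ s, w i * g i ^ q) ^ (r / q) := by
  have hweight {t : ℝ} (ht : t ≠ 0) {i} (hi : i ∈ s) {h : ι → ℝ} (hh : ∀ i ∈ s, 0 ≤ h i) :
      (w i ^ t⁻¹ * h i) ^ t = w i * h i ^ t := by
    rw [Real.mul_rpow (by positivity [hw i hi]) (hh i hi), Real.rpow_inv_rpow (hw i hi) ht]
  have hsplit {i} (hi : i ∈ s) :
      w i ^ p⁻¹ * f i * (w i ^ q⁻¹ * g i) = w i ^ r⁻¹ * (f i * g i) := by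
    rw [hpqr.inv_eq, Real.rpow_add' (hw i hi) (by positivity [hpqr.pos, hpqr.symm.pos])]
    ring
  -- the unweighted inequality for `w^{1/p} f` and `w^{1/q} g`
  have := Real.Lr_rpow_le_Lp_mul_Lq_of_nonneg s hpqr
    (f := fun i => w i ^ p⁻¹ * f i) (g := fun i => w i ^ q⁻¹ * g i)
    (fun i hi => by positivity [hw i hi, hf i hi]) (fun i hi => by positivity [hw i hi, hg i hi])
  rwa [sum_congr rfl fun i hi => by rw [hsplit hi, hweight hpqr.ne_zero' hi fun j hj =>
      mul_nonneg (hf j hj) (hg j hj)],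
    sum_congr rfl fun i hi => hweight hpqr.ne_zero hi hf,
    sum_congr rfl fun i hi => hweight hpqr.symm.ne_zero hi hg] at this

lemma mK_nonneg (M : Fin d → ℕ) : 0 ≤ mK M := prod_nonneg fun ℓ _ => by positivity

/-- `∑_{k=1}^N Δt ∑_σ m(Δ_σ) F^k_σ`, the edge `σ` joining `K` to `K + e_ℓ`; `m(Δ_σ) = m(K)`. -/
noncomputable def spaceTimeSum (M : Fin d → ℕ) [∀ ℓ, NeZero (M ℓ)] (N : ℕ) (Δt : ℝ)
    (F : ℕ → Cell M → Fin d → ℝ) : ℝ :=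
  ∑ k ∈ Icc 1 N, Δt * ∑ K : Cell M, ∑ ℓ : Fin d, mK M * F k K ℓ

section spaceTimeSum

variable (M : Fin d → ℕ) [∀ ℓ, NeZero (M ℓ)] (N : ℕ) {Δt : ℝ}

lemma spaceTimeSum_eq_sum_product (F : ℕ → Cell M → Fin d → ℝ) :
    spaceTimeSum M N Δt F =
      ∑ x ∈ Icc 1 N ×ˢ (univ : Finset (Cell M × Fin d)), Δt * mK M * F x.1 x.2.1 x.2.2 := by
  simp only [spaceTimeSum, sum_product, Fintype.sum_prod_type, mul_sum, mul_assoc]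

lemma spaceTimeSum_const_mul (c : ℝ) (F : ℕ → Cell M → Fin d → ℝ) :
    spaceTimeSum M N Δt (fun k K ℓ => c * F k K ℓ) = c * spaceTimeSum M N Δt F := by
  simp only [spaceTimeSum, mul_sum, mul_left_comm]

lemma spaceTimeSum_mul_rpow_le (hΔt : 0 ≤ Δt) {p q r : ℝ} (hpqr : p.HolderTriple q r)
    {f g : ℕ → Cell M → Fin d → ℝ} (hf : ∀ k K ℓ, 0 ≤ f k K ℓ) (hg : ∀ k K ℓ, 0 ≤ g k K ℓ) :
    spaceTimeSum M N Δt (fun k K ℓ => (f k K ℓ * g k K ℓ) ^ r) ≤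
      spaceTimeSum M N Δt (fun k K ℓ => f k K ℓ ^ p) ^ (r / p) *
        spaceTimeSum M N Δt (fun k K ℓ => g k K ℓ ^ q) ^ (r / q) := by
  simp only [spaceTimeSum_eq_sum_product]
  exact weighted_Lr_rpow_le_Lp_mul_Lq_of_nonneg _ hpqr (fun _ _ => mul_nonneg hΔt (mK_nonneg M))
    (fun _ _ => hf _ _ _) (fun _ _ => hg _ _ _)

end spaceTimeSum

theorem discrete_gradient_holder_estimate_general {d N : ℕ} (hd : 1 ≤ d)
    (M : Fin d → ℕ) [∀ ℓ, NeZero (M ℓ)]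
    (Δt : ℝ) (hΔt : 0 < Δt)
    (u : ℕ → Cell M → ℝ) (hu : ∀ k K, 0 ≤ u k K)
    (r₁ r₂ : ℝ) (hr₁ : r₁ = ((d:ℝ) + 2) / d) (hr₂ : r₂ = ((d:ℝ) + 2) / (d + 1)) :
    ∑ k ∈ Finset.Icc 1 N, Δt * ∑ K : Cell M, ∑ ℓ : Fin d,
        mK M * gradh M (u k) K ℓ ^ r₂
      ≤ (2:ℝ) ^ r₂ *
        (∑ k ∈ Finset.Icc 1 N, Δt * ∑ K : Cell M, ∑ ℓ : Fin d,
            mK M * (((Real.sqrt (u k K) + Real.sqrt (u k (shift M K ℓ 1))) / 2) ^ 2) ^ r₁)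
          ^ (r₂ / (2 * r₁)) *
        (∑ k ∈ Finset.Icc 1 N, Δt * ∑ K : Cell M, ∑ ℓ : Fin d,
            mK M * gradh M (fun J => Real.sqrt (u k J)) K ℓ ^ 2)
          ^ (r₂ / 2) := by
  have hexp : (2 * r₁).HolderTriple 2 r₂ := by
    subst hr₁ hr₂; exact holderTriple_two_mul_add_two_div (by exact_mod_cast hd)
  set a : ℕ → Cell M → Fin d → ℝ := fun k K ℓ => (√(u k K) + √(u k (shift M K ℓ 1))) / 2
  set b : ℕ → Cell M → Fin d → ℝ := fun k K ℓ => gradh M (fun J => √(u k J)) K ℓ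
  have ha : ∀ k K ℓ, 0 ≤ a k K ℓ := fun k K ℓ => by positivity
  have hb : ∀ k K ℓ, 0 ≤ b k K ℓ := fun k K ℓ => by simp only [b, gradh]; positivity
  have hgrad : ∀ k K ℓ, gradh M (u k) K ℓ ^ r₂ = 2 ^ r₂ * (a k K ℓ * b k K ℓ) ^ r₂ :=
    fun k K ℓ => by
      rw [gradh_eq_two_mul_mean_mul_gradh_sqrt M (hu k), Real.mul_rpow zero_le_two
        (mul_nonneg (ha k K ℓ) (hb k K ℓ))]
  have hmean : ∀ k K ℓ, (a k K ℓ ^ 2) ^ r₁ = a k K ℓ ^ (2 * r₁) := fun k K ℓ => by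
    rw [Real.rpow_mul (ha k K ℓ), Real.rpow_two]
  calc _ = 2 ^ r₂ * spaceTimeSum M N Δt (fun k K ℓ => (a k K ℓ * b k K ℓ) ^ r₂) := by
        rw [← spaceTimeSum_const_mul]; simp only [spaceTimeSum, hgrad]
    _ ≤ 2 ^ r₂ * (spaceTimeSum M N Δt (fun k K ℓ => a k K ℓ ^ (2 * r₁)) ^ (r₂ / (2 * r₁)) *
          spaceTimeSum M N Δt (fun k K ℓ => b k K ℓ ^ (2:ℝ)) ^ (r₂ / 2)) := by
        gcongr; exact spaceTimeSum_mul_rpow_le M N hΔt.le hexp ha hb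
    _ = _ := by simp only [spaceTimeSum, ← hmean, Real.rpow_two, mul_assoc]; rfl

/-- discrete Hölder estimate for the gradient of `u` in terms of the
power means and the gradient of `√u`. -/
theorem discrete_gradient_holder_estimate {d N : ℕ} (hd : 1 ≤ d) (hN : 1 ≤ N)
    (M : Fin d → ℕ) [∀ ℓ, NeZero (M ℓ)]
    (Δt : ℝ) (hΔt : 0 < Δt)
    (u : ℕ → Cell M → ℝ) (hu : ∀ k K, 0 ≤ u k K)
    (r₁ r₂ : ℝ) (hr₁ : r₁ = ((d:ℝ) + 2) / d) (hr₂ : r₂ = ((d:ℝ) + 2) / (d + 1)) :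
    ∑ k ∈ Finset.Icc 1 N, Δt * ∑ K : Cell M, ∑ ℓ : Fin d,
        mK M * gradh M (u k) K ℓ ^ r₂
      ≤ (2:ℝ) ^ r₂ *
        (∑ k ∈ Finset.Icc 1 N, Δt * ∑ K : Cell M, ∑ ℓ : Fin d,
            mK M * (((Real.sqrt (u k K) + Real.sqrt (u k (shift M K ℓ 1))) / 2) ^ 2) ^ r₁)
          ^ (r₂ / (2 * r₁)) *
        (∑ k ∈ Finset.Icc 1 N, Δt * ∑ K : Cell M, ∑ ℓ : Fin d,
            mK M * gradh M (fun J => Real.sqrt (u k J)) K ℓ ^ 2)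
          ^ (r₂ / 2) :=
  discrete_gradient_holder_estimate_general hd M Δt hΔt u hu r₁ r₂ hr₁ hr₂

end SG
end

section
/- On the Cartesian torus grid, let κ > 0, Δt > 0, let B satisfy hypothesis (H2), let r₂ = (d+2)/(d+1) and r₂' = d+2, and suppose u^{k−1}_i, u^k_i : G → ℝ and p^k_i : G → ℝ satisfy one implicit Euler finite-volume step with prescribed potentials. Then for every φ : G → ℝ, the discrete time derivative satisfies |∑_{K∈G} m(K)·(u^k_i(K) − u^{k−1}_i(K))/Δt·φ(K)| ≤ (κ·‖∇^h u^k_i‖_{0,r₂,T*} + ‖û·∇^h p^k_i‖_{0,r₂,T*})·‖∇^h φ‖_{0,r₂',T*}, where û·∇^h p^k_i is the edge function σ ↦ û_σ(u^k_i, p^k_i)·|∇^h_σ p^k_i|. In particular, ‖(u^k_i − u^{k−1}_i)/Δt‖_{−1,r₂,T} ≤ κ·‖∇^h u^k_i‖_{0,r₂,T*} + ‖û·∇^h p^k_i‖_{0,r₂,T*}, where ‖w‖_{−1,r₂,T} = sup{|∑_{K∈G} m(K)·w(K)·φ(K)| : φ : G → ℝ with ‖φ‖_{0,r₂',T} + ‖∇^h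 φ‖_{0,r₂',T*} = 1}. -/
open MeasureTheory Real Finset

namespace SG

variable {d : ℕ}

/-!
Test the scheme against `φ`. The flux is antisymmetric in its two cells, so summation by parts
turns `∑_K m(K) (u^k − u^{k−1})(K)/Δt · φ(K)` into `∑_σ F_{K,σ} D_{K,σ}φ`. Since `0 < B ≤ 1`,
`|F_{K,σ}| ≤ τ_σ (κ D_σu + |û_σ| D_σp)`, and `τ_σ D_σv D_σφ ≤ m(Δ_σ) |∇^h_σ v| |∇^h_σ φ|` because
the factor `d` in `∇^h` is at least `1`. Hölder's inequality with the conjugate exponents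
`r₂, r₂'` then gives the bound, and the dual-norm bound follows since the normalisation of `φ`
forces `‖∇^h φ‖_{0,r₂',T*} ≤ 1`.
-/

lemma weighted_inner_le_Lp_mul_Lq {ι : Type*} (s : Finset ι) {p q : ℝ}
    (hpq : p.HolderConjugate q) (w f g : ι → ℝ) (hw : ∀ i ∈ s, 0 ≤ w i) :
    ∑ i ∈ s, w i * (|f i| * |g i|)
      ≤ (∑ i ∈ s, w i * |f i| ^ p) ^ (1 / p) * (∑ i ∈ s, w i * |g i| ^ q) ^ (1 / q) := by
  have hsplit : ∀ i ∈ s,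
      w i * (|f i| * |g i|) = (w i ^ (1 / p) * |f i|) * (w i ^ (1 / q) * |g i|) := by
    intro i hi
    rw [mul_mul_mul_comm (w i ^ (1 / p)), ← Real.rpow_add' (hw i hi)
      (by rw [hpq.one_div_add_one_div]; norm_num), hpq.one_div_add_one_div, div_one,
      Real.rpow_one]
  have hpow : ∀ {r : ℝ}, r ≠ 0 → ∀ (h : ι → ℝ), ∀ i ∈ s,
      abs (w i ^ (1 / r) * |h i|) ^ r = w i * |h i| ^ r := by
    intro r hr h i hi
    have hwi := hw i hi
    rw [abs_of_nonneg (by positivity), Real.mul_rpow (by positivity) (abs_nonneg _),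
      ← Real.rpow_mul hwi, one_div_mul_cancel hr, Real.rpow_one]
  rw [sum_congr rfl hsplit, ← sum_congr rfl (hpow hpq.ne_zero f),
    ← sum_congr rfl (hpow hpq.symm.ne_zero g)]
  exact Real.inner_le_Lp_mul_Lq s _ _ hpq

lemma τ_mul_le_mK_mul (M : Fin d → ℕ) (ℓ : Fin d) {x y : ℝ} (hx : 0 ≤ x) (hy : 0 ≤ y) :
    τ M ℓ * (x * y) ≤ mK M * ((d * M ℓ * x) * (d * M ℓ * y)) := by
  have hd : (1 : ℝ) ≤ d := by exact_mod_cast ℓ.pos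
  have hτ : 0 ≤ τ M ℓ * (x * y) :=
    mul_nonneg (mul_nonneg (mK_nonneg M) (sq_nonneg _)) (mul_nonneg hx hy)
  calc τ M ℓ * (x * y) ≤ (d * d) * (τ M ℓ * (x * y)) :=
        le_mul_of_one_le_left hτ (one_le_mul_of_one_le_of_one_le hd hd)
    _ = _ := by rw [τ]; ring

section Shift

variable (M : Fin d → ℕ)

lemma shift_shift (K : Cell M) (ℓ : Fin d) (s t : ℤ) :
    shift M (shift M K ℓ s) ℓ t = shift M K ℓ (s + t) := by
  simp [shift, add_assoc]

lemma shift_zero (K : Cell M) (ℓ : Fin d) : shift M K ℓ 0 = K := by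
  simp [shift]

def shiftPerm (ℓ : Fin d) : Equiv.Perm (Cell M) where
  toFun K := shift M K ℓ 1
  invFun K := shift M K ℓ (-1)
  left_inv K := by simp [shift_shift, shift_zero]
  right_inv K := by simp [shift_shift, shift_zero]

variable [∀ ℓ, NeZero (M ℓ)]

lemma sum_shift_neg_one_mul {F : Cell M → Cell M → ℝ} (hF : ∀ K L, F L K = -F K L)
    (ℓ : Fin d) (φ : Cell M → ℝ) :
    ∑ K, F K (shift M K ℓ (-1)) * φ K = -∑ K, F K (shift M K ℓ 1) * φ (shift M K ℓ 1) := by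
  rw [← Equiv.sum_comp (shiftPerm M ℓ), ← sum_neg_distrib]
  refine sum_congr rfl fun K _ => ?_
  simp [shiftPerm, shift_shift, shift_zero, hF K]

lemma sum_incident_mul_eq_neg_sum_mul_sub {F : Fin d → Cell M → Cell M → ℝ}
    (hF : ∀ ℓ K L, F ℓ L K = -F ℓ K L) (φ : Cell M → ℝ) :
    ∑ K, (∑ ℓ, (F ℓ K (shift M K ℓ 1) + F ℓ K (shift M K ℓ (-1)))) * φ K
      = -∑ K, ∑ ℓ, F ℓ K (shift M K ℓ 1) * (φ (shift M K ℓ 1) - φ K) := by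
  have hback : ∑ K, ∑ ℓ, F ℓ K (shift M K ℓ (-1)) * φ K
      = -∑ K, ∑ ℓ, F ℓ K (shift M K ℓ 1) * φ (shift M K ℓ 1) := by
    rw [sum_comm, sum_congr rfl fun ℓ _ => sum_shift_neg_one_mul M (hF ℓ) ℓ φ,
      sum_neg_distrib, sum_comm]
  simp only [sum_mul, add_mul, mul_sub, sum_add_distrib, sum_sub_distrib, hback]
  ring

end Shift

section Flux

variable {M : Fin d → ℕ}

lemma upw_swap_mul_sub (u p : Cell M → ℝ) (K L : Cell M) :
    upw u p L K * (p K - p L) = -(upw u p K L * (p L - p K)) := by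
  unfold upw
  rcases lt_trichotomy (p K) (p L) with h | h | h
  · rw [if_neg (by linarith), if_pos (by linarith)]; ring
  · simp [h]
  · rw [if_pos (by linarith), if_neg (by linarith)]; ring

lemma flux_swap (κ : ℝ) (B : ℝ → ℝ) (u p : Cell M → ℝ) (ℓ : Fin d) (K L : Cell M) :
    flux M κ B u p ℓ L K = -flux M κ B u p ℓ K L := by
  unfold flux
  rw [abs_sub_comm (p K) (p L), upw_swap_mul_sub u p K L]
  ring

lemma abs_Bk_le {κ : ℝ} (hκ : 0 < κ) {B : ℝ → ℝ} (hB : H2 B) {s : ℝ} (hs : 0 ≤ s) :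
    |Bk κ B s| ≤ κ := by
  obtain ⟨hpos, hle⟩ := hB.2 (s / κ) (div_nonneg hs hκ.le)
  rw [Bk, abs_of_pos (mul_pos hκ hpos)]
  exact mul_le_of_le_one_right hκ.le hle

lemma abs_flux_le {κ : ℝ} (hκ : 0 < κ) {B : ℝ → ℝ} (hB : H2 B) (u p : Cell M → ℝ)
    (ℓ : Fin d) (K L : Cell M) :
    |flux M κ B u p ℓ K L| ≤ τ M ℓ * (κ * |u L - u K| + |upw u p K L| * |p L - p K|) := by
  have hτ : 0 ≤ τ M ℓ := mul_nonneg (mK_nonneg M) (sq_nonneg _)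
  rw [flux, neg_mul, abs_neg, abs_mul, abs_of_nonneg hτ]
  gcongr
  calc _ ≤ abs (Bk κ B |p L - p K|) * |u L - u K| + |upw u p K L| * |p L - p K| := by
        rw [← abs_mul, ← abs_mul]; exact abs_add_le _ _
    _ ≤ κ * |u L - u K| + |upw u p K L| * |p L - p K| := by
        gcongr; exact abs_Bk_le hκ hB (abs_nonneg _)

lemma abs_gradh (v : Cell M → ℝ) (K : Cell M) (ℓ : Fin d) : |gradh M v K ℓ| = gradh M v K ℓ :=
  abs_of_nonneg (by unfold gradh; positivity)

lemma abs_flux_mul_sub_le {κ : ℝ} (hκ : 0 < κ) {B : ℝ → ℝ} (hB : H2 B)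
    (u p φ : Cell M → ℝ) (ℓ : Fin d) (K : Cell M) :
    |flux M κ B u p ℓ K (shift M K ℓ 1) * (φ (shift M K ℓ 1) - φ K)|
      ≤ κ * (mK M * (gradh M u K ℓ * gradh M φ K ℓ))
        + mK M * (|upw u p K (shift M K ℓ 1) * gradh M p K ℓ| * gradh M φ K ℓ) := by
  set L := shift M K ℓ 1
  have hu := τ_mul_le_mK_mul M ℓ (abs_nonneg (u L - u K)) (abs_nonneg (φ L - φ K))
  have hp := τ_mul_le_mK_mul M ℓ (abs_nonneg (p L - p K)) (abs_nonneg (φ L - φ K))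
  rw [abs_mul, abs_mul, abs_gradh]
  calc _ ≤ τ M ℓ * (κ * |u L - u K| + |upw u p K L| * |p L - p K|) * |φ L - φ K| := by
        gcongr; exact abs_flux_le hκ hB u p ℓ K L
    _ = κ * (τ M ℓ * (|u L - u K| * |φ L - φ K|))
          + |upw u p K L| * (τ M ℓ * (|p L - p K| * |φ L - φ K|)) := by ring
    _ ≤ κ * (mK M * ((d * M ℓ * |u L - u K|) * (d * M ℓ * |φ L - φ K|)))
          + |upw u p K L| * (mK M * ((d * M ℓ * |p L - p K|) * (d * M ℓ * |φ L - φ K|))) := by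
        gcongr
    _ = _ := by unfold gradh; ring

end Flux

section Norms

variable {M : Fin d → ℕ} [∀ ℓ, NeZero (M ℓ)]

lemma enorm_nonneg (q : ℝ) (w : Cell M → Fin d → ℝ) : 0 ≤ enorm M q w := by
  have := mK_nonneg M
  unfold enorm; positivity

lemma normq_nonneg (q : ℝ) (v : Cell M → ℝ) : 0 ≤ normq M q v := by
  have := mK_nonneg M
  unfold normq; positivity

lemma sum_mK_mul_abs_mul_abs_le {r r' : ℝ} (hr : r.HolderConjugate r')
    (a b : Cell M → Fin d → ℝ) :
    ∑ K, ∑ ℓ, mK M * (|a K ℓ| * |b K ℓ|) ≤ enorm M r a * enorm M r' b := by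
  simpa only [enorm, Fintype.sum_prod_type] using
    weighted_inner_le_Lp_mul_Lq univ hr (fun _ : Cell M × Fin d => mK M)
      (fun x => a x.1 x.2) (fun x => b x.1 x.2) fun _ _ => mK_nonneg M

end Norms

theorem abs_sum_timeDiff_mul_le {M : Fin d → ℕ} [∀ ℓ, NeZero (M ℓ)] {r r' : ℝ}
    (hr : r.HolderConjugate r') {κ Δt : ℝ} (hκ : 0 < κ) {B : ℝ → ℝ} (hB : H2 B)
    {uprev u p : Cell M → ℝ} (hstep : Step M κ Δt B uprev u p) (φ : Cell M → ℝ) :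
    |∑ K, mK M * ((u K - uprev K) / Δt) * φ K|
      ≤ (κ * enorm M r (gradh M u)
          + enorm M r (fun K ℓ => upw u p K (shift M K ℓ 1) * gradh M p K ℓ))
        * enorm M r' (gradh M φ) := by
  have hdt : ∀ K, mK M * ((u K - uprev K) / Δt) = -fluxSum M κ B u p K := fun K => by
    linarith [mul_div_assoc (mK M) (u K - uprev K) Δt, hstep K]
  have hparts : ∑ K, mK M * ((u K - uprev K) / Δt) * φ K
      = ∑ K, ∑ ℓ, flux M κ B u p ℓ K (shift M K ℓ 1) * (φ (shift M K ℓ 1) - φ K) := by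
    simp only [hdt, neg_mul, sum_neg_distrib, fluxSum,
      sum_incident_mul_eq_neg_sum_mul_sub M (flux_swap κ B u p), neg_neg]
  rw [hparts]
  calc _ ≤ ∑ K, ∑ ℓ, |flux M κ B u p ℓ K (shift M K ℓ 1) * (φ (shift M K ℓ 1) - φ K)| :=
        (abs_sum_le_sum_abs _ _).trans (sum_le_sum fun K _ => abs_sum_le_sum_abs _ _)
    _ ≤ ∑ K, ∑ ℓ, (κ * (mK M * (|gradh M u K ℓ| * |gradh M φ K ℓ|))
          + mK M * (|upw u p K (shift M K ℓ 1) * gradh M p K ℓ| * |gradh M φ K ℓ|)) := by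
        simp only [abs_gradh]
        gcongr with K _ ℓ _
        exact abs_flux_mul_sub_le hκ hB u p φ ℓ K
    _ = κ * ∑ K, ∑ ℓ, mK M * (|gradh M u K ℓ| * |gradh M φ K ℓ|)
          + ∑ K, ∑ ℓ,
              mK M * (|upw u p K (shift M K ℓ 1) * gradh M p K ℓ| * |gradh M φ K ℓ|) := by
        simp only [sum_add_distrib, mul_sum]
    _ ≤ κ * (enorm M r (gradh M u) * enorm M r' (gradh M φ))
          + enorm M r (fun K ℓ => upw u p K (shift M K ℓ 1) * gradh M p K ℓ)
            * enorm M r' (gradh M φ) := by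
        gcongr <;> exact sum_mK_mul_abs_mul_abs_le hr _ _
    _ = _ := by ring

lemma holderConjugate_add_two_div_add_one {x : ℝ} (hx : 0 ≤ x) :
    ((x + 2) / (x + 1)).HolderConjugate (x + 2) := by
  have h := (Real.HolderConjugate.conjExponent (p := x + 2) (by linarith)).symm
  rwa [Real.conjExponent, show x + 2 - 1 = x + 1 by ring] at h

theorem discrete_time_derivative_bound_general {d : ℕ} (M : Fin d → ℕ)
    [∀ ℓ, NeZero (M ℓ)]
    (κ Δt : ℝ) (hκ : 0 < κ)
    (B : ℝ → ℝ) (hB : H2 B)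
    (uprev u p : Cell M → ℝ)
    (hstep : Step M κ Δt B uprev u p)
    (r₂ r₂' : ℝ) (hr₂ : r₂ = ((d:ℝ) + 2) / (d + 1)) (hr₂' : r₂' = (d:ℝ) + 2) :
    (∀ φ : Cell M → ℝ,
      |∑ K : Cell M, mK M * ((u K - uprev K) / Δt) * φ K|
        ≤ (κ * enorm M r₂ (gradh M u)
            + enorm M r₂ (fun K ℓ => upw u p K (shift M K ℓ 1) * gradh M p K ℓ))
          * enorm M r₂' (gradh M φ)) ∧
    sSup {r : ℝ | ∃ φ : Cell M → ℝ,
          normq M r₂' φ + enorm M r₂' (gradh M φ) = 1 ∧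
          r = |∑ K : Cell M, mK M * ((u K - uprev K) / Δt) * φ K|}
      ≤ κ * enorm M r₂ (gradh M u)
          + enorm M r₂ (fun K ℓ => upw u p K (shift M K ℓ 1) * gradh M p K ℓ) := by
  have hr : r₂.HolderConjugate r₂' :=
    hr₂ ▸ hr₂' ▸ holderConjugate_add_two_div_add_one d.cast_nonneg
  have hbound := abs_sum_timeDiff_mul_le hr hκ hB hstep
  have hC : 0 ≤ κ * enorm M r₂ (gradh M u)
      + enorm M r₂ (fun K ℓ => upw u p K (shift M K ℓ 1) * gradh M p K ℓ) :=
    add_nonneg (mul_nonneg hκ.le (enorm_nonneg _ _)) (enorm_nonneg _ _)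
  refine ⟨hbound, Real.sSup_le ?_ hC⟩
  rintro _ ⟨φ, hφ, rfl⟩
  have hφ_grad : enorm M r₂' (gradh M φ) ≤ 1 := by linarith [normq_nonneg (M := M) r₂' φ]
  exact (hbound φ).trans (mul_le_of_le_one_right hC hφ_grad)

/-- bound for the discrete time derivative in the discrete dual norm. -/
theorem discrete_time_derivative_bound {d : ℕ} (hd : 1 ≤ d) (M : Fin d → ℕ)
    [∀ ℓ, NeZero (M ℓ)]
    (κ Δt : ℝ) (hκ : 0 < κ) (hΔt : 0 < Δt)
    (B : ℝ → ℝ) (hB : H2 B)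
    (uprev u p : Cell M → ℝ)
    (hstep : Step M κ Δt B uprev u p)
    (r₂ r₂' : ℝ) (hr₂ : r₂ = ((d:ℝ) + 2) / (d + 1)) (hr₂' : r₂' = (d:ℝ) + 2) :
    (∀ φ : Cell M → ℝ,
      |∑ K : Cell M, mK M * ((u K - uprev K) / Δt) * φ K|
        ≤ (κ * enorm M r₂ (gradh M u)
            + enorm M r₂ (fun K ℓ => upw u p K (shift M K ℓ 1) * gradh M p K ℓ))
          * enorm M r₂' (gradh M φ)) ∧
    sSup {r : ℝ | ∃ φ : Cell M → ℝ,
          normq M r₂' φ + enorm M r₂' (gradh M φ) = 1 ∧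
          r = |∑ K : Cell M, mK M * ((u K - uprev K) / Δt) * φ K|}
      ≤ κ * enorm M r₂ (gradh M u)
          + enorm M r₂ (fun K ℓ => upw u p K (shift M K ℓ 1) * gradh M p K ℓ) :=
  discrete_time_derivative_bound_general M κ Δt hκ B hB uprev u p hstep r₂ r₂' hr₂ hr₂'

end SG
end
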